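/- Let x₁, …, x₉ be nine points on the smooth locus of the cuspidal cubic C = {y²z - x³ = 0}, with parameters t₁, …, t₉ ∈ C under the parametrization t ↦ [t:1:t³]. If t₁ + ⋯ + t₉ = 0, then there exists a homogeneous cubic form G, not proportional to y²z - x³, vanishing at all x_i. -/
import Mathlib


open MvPolynomial

/-- if `x₁, …, x₉` are nine points of the smooth locus of the cuspidal
cubic `{y²z = x³}` with parameters `t₁, …, t₉` (under `t ↦ [t:1:t³]`) satisfying
`t₁ + ⋯ + t₉ = 0`, then there is a homogeneous cubic form `G`, not proportional to
`y²z - x³`, vanishing at all nine points. -/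
theorem stmt_9 (t : Fin 9 → ℂ) (hsum : ∑ i, t i = 0)
    (x : Fin 9 → (Fin 3 → ℂ)) (hx : ∀ i, x i = ![t i, 1, (t i) ^ 3]) :
    ∃ G : MvPolynomial (Fin 3) ℂ,
      G.IsHomogeneous 3 ∧
      (∀ i, eval (x i) G = 0) ∧
      (∀ c : ℂ, G ≠ c • ((X 1) ^ 2 * X 2 - (X 0) ^ 3)) := by
  classical
  set p : Polynomial ℂ := ∏ i, (Polynomial.X - Polynomial.C (t i)) with hp
  have hmonic : p.Monic :=
    Polynomial.monic_prod_of_monic _ _ fun i _ => Polynomial.monic_X_sub_C _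
  have hdeg : p.natDegree = 9 := by
    rw [hp, Polynomial.natDegree_prod_of_monic _ _ fun i _ => Polynomial.monic_X_sub_C _]
    simp
  have h9 : p.coeff 9 = 1 := by
    have := hmonic.coeff_natDegree
    rwa [hdeg] at this
  have h8 : p.coeff 8 = 0 := by
    have hnc : p.nextCoeff = -∑ i, t i := by
      rw [hp]; exact Polynomial.prod_X_sub_C_nextCoeff t
    rw [hsum, neg_zero] at hnc
    rw [Polynomial.nextCoeff_of_natDegree_pos (by omega), hdeg] at hnc
    simpa using hnc
  set a : ℕ → ℂ := fun k => p.coeff k with ha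
  refine ⟨C (a 0) * X 1 ^ 3 + C (a 1) * X 0 * X 1 ^ 2 + C (a 2) * X 0 ^ 2 * X 1
    + C (a 3) * X 1 ^ 2 * X 2 + C (a 4) * X 0 * X 1 * X 2 + C (a 5) * X 0 ^ 2 * X 2
    + C (a 6) * X 1 * X 2 ^ 2 + C (a 7) * X 0 * X 2 ^ 2 + X 2 ^ 3, ?_, ?_, ?_⟩
  · -- homogeneity
    have hX : ∀ i : Fin 3, (X i : MvPolynomial (Fin 3) ℂ).IsHomogeneous 1 :=
      fun i => isHomogeneous_X _ _
    have h1 : (C (a 0) * X 1 ^ 3 : MvPolynomial (Fin 3) ℂ).IsHomogeneous 3 := by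
      simpa using (isHomogeneous_C (Fin 3) (a 0)).mul ((hX 1).pow 3)
    have h2 : (C (a 1) * X 0 * X 1 ^ 2 : MvPolynomial (Fin 3) ℂ).IsHomogeneous 3 := by
      simpa using ((isHomogeneous_C (Fin 3) (a 1)).mul (hX 0)).mul ((hX 1).pow 2)
    have h3 : (C (a 2) * X 0 ^ 2 * X 1 : MvPolynomial (Fin 3) ℂ).IsHomogeneous 3 := by
      simpa using ((isHomogeneous_C (Fin 3) (a 2)).mul ((hX 0).pow 2)).mul (hX 1)
    have h4 : (C (a 3) * X 1 ^ 2 * X 2 : MvPolynomial (Fin 3) ℂ).IsHomogeneous 3 := by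
      simpa using ((isHomogeneous_C (Fin 3) (a 3)).mul ((hX 1).pow 2)).mul (hX 2)
    have h5 : (C (a 4) * X 0 * X 1 * X 2 : MvPolynomial (Fin 3) ℂ).IsHomogeneous 3 := by
      simpa using (((isHomogeneous_C (Fin 3) (a 4)).mul (hX 0)).mul (hX 1)).mul (hX 2)
    have h6 : (C (a 5) * X 0 ^ 2 * X 2 : MvPolynomial (Fin 3) ℂ).IsHomogeneous 3 := by
      simpa using ((isHomogeneous_C (Fin 3) (a 5)).mul ((hX 0).pow 2)).mul (hX 2)
    have h7 : (C (a 6) * X 1 * X 2 ^ 2 : MvPolynomial (Fin 3) ℂ).IsHomogeneous 3 := by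
      simpa using ((isHomogeneous_C (Fin 3) (a 6)).mul (hX 1)).mul ((hX 2).pow 2)
    have h8' : (C (a 7) * X 0 * X 2 ^ 2 : MvPolynomial (Fin 3) ℂ).IsHomogeneous 3 := by
      simpa using ((isHomogeneous_C (Fin 3) (a 7)).mul (hX 0)).mul ((hX 2).pow 2)
    have h9' : (X 2 ^ 3 : MvPolynomial (Fin 3) ℂ).IsHomogeneous 3 := by
      simpa using (hX 2).pow 3
    exact (((((((h1.add h2).add h3).add h4).add h5).add h6).add h7).add h8').add h9'
  · -- vanishing
    intro i
    have hroot : p.eval (t i) = 0 := by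
      rw [hp, Polynomial.eval_prod]
      exact Finset.prod_eq_zero (Finset.mem_univ i) (by simp)
    have hev : p.eval (t i) = ∑ k ∈ Finset.range 10, p.coeff k * (t i) ^ k :=
      Polynomial.eval_eq_sum_range' (by omega) _
    rw [hev] at hroot
    simp only [Finset.sum_range_succ, Finset.sum_range_zero, h8, h9] at hroot
    simp only [hx, eval_add, eval_mul, eval_pow, eval_C, eval_X]
    simp only [Matrix.cons_val_zero, Matrix.cons_val_one, Matrix.head_cons,
      Matrix.cons_val_two, Matrix.tail_cons]
    rw [ha]
    linear_combination hroot
  · -- not proportional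
    intro c h
    have := congrArg (eval ![(0 : ℂ), 0, 1]) h
    simp [smul_eq_C_mul] at this
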